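/- Let b_1, b_2 be nonzero real numbers and m, n nonnegative integers. Then Σ_{a=0}^{n} (−1)^a C(m+n+1, n−a) b_1^a b_2^{−a−1} B_{n−a} E_{m+a+1}(0) − Σ_{a=0}^{m} (−1)^a C(m+n+1, m−a) b_2^a b_1^{−a−1} E_{m−a}(0) B_{n+a+1} = ((−1)^m/(b_1^{m+2} b_2^{n+1})) · (2/(m+n+2)) Σ_{a=1}^{m+n+2} (−1)^a C(m+n+2, a) b_1^a b_2^{m+n+2−a} (1 − 2^a) B_{m+n+2−a} B_a, where B_k = B_k(0) are the Bernoulli numbers and E_k(0) is the classical Euler polynomial evaluated at 0. -/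

import Mathlib

/-- Higher-order Euler polynomial `E_m^{(α)}(z)` of real order `α`, defined as the `m`-th
Taylor coefficient (times `m!`) of the generating function `(2/(e^u+1))^α e^{uz}` at `u = 0`. -/
noncomputable def eulerH (α : ℝ) (m : ℕ) (z : ℝ) : ℝ :=
  iteratedDeriv m (fun u : ℝ => (2 / (Real.exp u + 1)) ^ α * Real.exp (u * z)) 0

/-- Higher-order Bernoulli polynomial `B_m^{(α)}(z)` of real order `α`, defined as the `m`-th
Taylor coefficient (times `m!`) of the generating function `(u/(e^u-1))^α e^{uz}` at `u = 0`
(the removable singularity at `u = 0` being filled in with the limit value `1`). -/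
noncomputable def bernoulliH (α : ℝ) (m : ℕ) (z : ℝ) : ℝ :=
  iteratedDeriv m
    (fun u : ℝ => (if u = 0 then (1 : ℝ) else u / (Real.exp u - 1)) ^ α * Real.exp (u * z)) 0

/-!
With `B(u) = u / (e^u - 1)` and `E(u) = 2 / (e^u + 1)` one has `u E(u) = 2 (B(u) - B(2u))`;
comparing Taylor coefficients gives `(k + 1) E_k(0) = 2 (1 - 2^(k+1)) B_(k+1)`. Substituting this
into the two sums on the left (and rewriting `C(m+n+1, k) / (k+1)` as `C(m+n+2, k+1) / (m+n+2)`)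
turns the first sum into the terms `a = m+2, …, m+n+2` of the sum on the right and the second,
read backwards, into the terms `a = 1, …, m+1`.
-/

open Real Finset

theorem AnalyticOnNhd.dslope {𝕜 E : Type*} [NontriviallyNormedField 𝕜] [NormedAddCommGroup E]
    [NormedSpace 𝕜 E] {f : 𝕜 → E} {s : Set 𝕜} (hf : AnalyticOnNhd 𝕜 f s) (a : 𝕜) :
    AnalyticOnNhd 𝕜 (_root_.dslope f a) s := by
  intro b hb
  rcases eq_or_ne b a with rfl | hba
  · obtain ⟨p, hp⟩ := hf b hb
    exact hp.has_fpower_series_dslope_fslope.analyticAt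
  · have : slope f a =ᶠ[nhds b] _root_.dslope f a := by
      filter_upwards [isOpen_ne.mem_nhds hba] with x hx
      exact (dslope_of_ne f hx).symm
    refine AnalyticAt.congr ?_ this
    simp only [slope_fun_def]
    exact ((analyticAt_id.sub analyticAt_const).inv (sub_ne_zero.2 hba)).smul
      ((hf b hb).sub analyticAt_const)

theorem iteratedDeriv_succ_fun_id_mul_zero {𝕜 : Type*} [NontriviallyNormedField 𝕜] {F : 𝕜 → 𝕜}
    {k : ℕ} (hF : ContDiff 𝕜 (k + 1) F) :
    iteratedDeriv (k + 1) (fun u => u * F u) 0 = (k + 1) * iteratedDeriv k F 0 := by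
  rw [iteratedDeriv_fun_mul (f := fun u => u) contDiffAt_id hF.contDiffAt, sum_range_succ',
    sum_range_succ']
  simp [iteratedDeriv_fun_id_zero]

noncomputable def bernoulliGen (u : ℝ) : ℝ := if u = 0 then 1 else u / (exp u - 1)

noncomputable def eulerGen (u : ℝ) : ℝ := 2 / (exp u + 1)

theorem dslope_exp_zero (u : ℝ) : dslope exp 0 u = if u = 0 then 1 else (exp u - 1) / u := by
  rcases eq_or_ne u 0 with rfl | hu
  · simp [dslope_same, Real.deriv_exp]
  · simp [dslope_of_ne _ hu, slope_def_field, hu]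

theorem dslope_exp_zero_ne_zero (u : ℝ) : dslope exp 0 u ≠ 0 := by
  rw [dslope_exp_zero]
  split_ifs with hu
  · exact one_ne_zero
  · exact div_ne_zero (by simpa [sub_eq_zero] using hu) hu

theorem bernoulliGen_eq_inv_dslope (u : ℝ) : bernoulliGen u = (dslope exp 0 u)⁻¹ := by
  rw [dslope_exp_zero, bernoulliGen]
  split_ifs <;> simp

theorem contDiff_bernoulliGen : ContDiff ℝ ω bernoulliGen := by
  rw [funext bernoulliGen_eq_inv_dslope]
  exact AnalyticOnNhd.contDiff fun u _ =>
    (analyticOnNhd_rexp.dslope 0 u trivial).inv (dslope_exp_zero_ne_zero u)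

theorem contDiff_eulerGen : ContDiff ℝ ω eulerGen :=
  contDiff_const.div (contDiff_exp.add contDiff_const) fun _ => by positivity

theorem mul_eulerGen (u : ℝ) : u * eulerGen u = 2 * (bernoulliGen u - bernoulliGen (2 * u)) := by
  rcases eq_or_ne u 0 with rfl | hu
  · simp [bernoulliGen, eulerGen]
  have hexp : exp u - 1 ≠ 0 := by simpa [sub_eq_zero] using hu
  have hexp2 : exp (2 * u) - 1 = (exp u - 1) * (exp u + 1) := by
    rw [two_mul, exp_add]; ring
  have hexp1 : exp u + 1 ≠ 0 := by positivity
  simp only [bernoulliGen, eulerGen, hu, mul_eq_zero, two_ne_zero, false_or, if_false, hexp2]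
  field_simp
  ring

theorem succ_mul_iteratedDeriv_eulerGen (k : ℕ) :
    (k + 1) * iteratedDeriv k eulerGen 0
      = 2 * (1 - 2 ^ (k + 1)) * iteratedDeriv (k + 1) bernoulliGen 0 := by
  have hB : ContDiff ℝ (k + 1) bernoulliGen := contDiff_bernoulliGen.of_le le_top
  have hB2 : ContDiff ℝ (k + 1) fun u => bernoulliGen (2 * u) :=
    hB.comp (contDiff_const.mul contDiff_id)
  rw [← iteratedDeriv_succ_fun_id_mul_zero (contDiff_eulerGen.of_le le_top), funext mul_eulerGen,
    iteratedDeriv_const_mul_field, iteratedDeriv_fun_sub hB.contDiffAt hB2.contDiffAt,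
    congrFun (iteratedDeriv_comp_const_mul hB 2) 0, mul_zero]
  ring

theorem eulerH_one_zero (k : ℕ) : eulerH 1 k 0 = iteratedDeriv k eulerGen 0 := by
  simp only [eulerH, rpow_one, mul_zero, exp_zero, mul_one]
  rfl

theorem bernoulliH_one_zero (k : ℕ) : bernoulliH 1 k 0 = iteratedDeriv k bernoulliGen 0 := by
  simp only [bernoulliH, rpow_one, mul_zero, exp_zero, mul_one]
  rfl

theorem choose_mul_eulerH_one_zero (N k : ℕ) :
    ((N + 1).choose k : ℝ) * eulerH 1 k 0
      = 2 / (N + 2) * ((N + 2).choose (k + 1) * (1 - 2 ^ (k + 1)) * bernoulliH 1 (k + 1) 0) := by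
  have hE := succ_mul_iteratedDeriv_eulerGen k
  rw [← eulerH_one_zero, ← bernoulliH_one_zero] at hE
  have hC : ((N : ℝ) + 2) * (N + 1).choose k = (N + 2).choose (k + 1) * (k + 1) := by
    exact_mod_cast Nat.add_one_mul_choose_eq (N + 1) k
  field_simp
  linear_combination eulerH 1 k 0 * hC + ((N + 2).choose (k + 1) : ℝ) * hE

noncomputable def bernoulliPairTerm (b₁ b₂ : ℝ) (N a : ℕ) : ℝ :=
  (-1) ^ a * (N.choose a : ℝ) * b₁ ^ a * b₂ ^ (N - a) * (1 - 2 ^ a) *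
    bernoulliH 1 (N - a) 0 * bernoulliH 1 a 0

theorem sum_Icc_one_add {M : Type*} [AddCommMonoid M] (f : ℕ → M) (p q : ℕ) :
    ∑ a ∈ Icc 1 (p + q), f a = ∑ a ∈ range p, f (a + 1) + ∑ a ∈ range q, f (p + a + 1) := by
  rw [← Ico_add_one_right_eq_Icc, ← sum_range_add (fun a => f (a + 1)), range_eq_Ico, sum_Ico_add']

theorem sum_bernoulliH_mul_eulerH {b₁ b₂ : ℝ} (hb₁ : b₁ ≠ 0) (hb₂ : b₂ ≠ 0) (m n : ℕ) :
    ∑ a ∈ range (n + 1), (-1 : ℝ) ^ a * (Nat.choose (m + n + 1) (n - a) : ℝ) *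
        b₁ ^ a * b₂ ^ (-(a : ℤ) - 1) * bernoulliH 1 (n - a) 0 * eulerH 1 (m + a + 1) 0
      = (-1) ^ m / (b₁ ^ (m + 2) * b₂ ^ (n + 1)) * (2 / (m + n + 2)) *
        ∑ a ∈ range (n + 1), bernoulliPairTerm b₁ b₂ (m + n + 2) (m + 1 + a + 1) := by
  rw [mul_sum]
  refine sum_congr rfl fun a ha => ?_
  have ha : a ≤ n := Nat.lt_succ_iff.mp (mem_range.mp ha)
  have hE := choose_mul_eulerH_one_zero (m + n) (m + a + 1)
  rw [Nat.choose_symm_of_eq_add (show m + n + 1 = (n - a) + (m + a + 1) by omega)]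
  have hsign : (-1 : ℝ) ^ (m + 1 + a + 1) = (-1) ^ a / (-1) ^ m := by
    rw [eq_div_iff (by simp), ← pow_add, show m + 1 + a + 1 + m = a + 2 * (m + 1) by ring,
      pow_add, pow_mul]
    norm_num
  have hb₂pow : b₂ ^ (-(a : ℤ) - 1) = b₂ ^ (n - a) / b₂ ^ (n + 1) := by
    rw [← zpow_natCast, ← zpow_natCast, ← zpow_sub₀ hb₂]; push_cast [ha]; ring_nf
  simp only [bernoulliPairTerm, hsign, hb₂pow, show m + n + 2 - (m + 1 + a + 1) = n - a by omega]
  push_cast at hE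
  calc _ = (-1 : ℝ) ^ a * b₁ ^ a * (b₂ ^ (n - a) / b₂ ^ (n + 1)) * bernoulliH 1 (n - a) 0 *
        (((m + n + 1).choose (m + a + 1) : ℝ) * eulerH 1 (m + a + 1) 0) := by ring
    _ = _ := by
      rw [hE, show m + a + 1 + 1 = m + 1 + a + 1 by ring]
      field_simp
      ring

theorem sum_eulerH_mul_bernoulliH {b₁ b₂ : ℝ} (hb₁ : b₁ ≠ 0) (hb₂ : b₂ ≠ 0) (m n : ℕ) :
    ∑ a ∈ range (m + 1), (-1 : ℝ) ^ a * (Nat.choose (m + n + 1) (m - a) : ℝ) *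
        b₂ ^ a * b₁ ^ (-(a : ℤ) - 1) * eulerH 1 (m - a) 0 * bernoulliH 1 (n + a + 1) 0
      = -((-1) ^ m / (b₁ ^ (m + 2) * b₂ ^ (n + 1)) * (2 / (m + n + 2)) *
        ∑ a ∈ range (m + 1), bernoulliPairTerm b₁ b₂ (m + n + 2) (a + 1)) := by
  rw [← sum_range_reflect (fun a => bernoulliPairTerm b₁ b₂ (m + n + 2) (a + 1)), mul_sum,
    ← sum_neg_distrib]
  refine sum_congr rfl fun a ha => ?_
  have ha : a ≤ m := Nat.lt_succ_iff.mp (mem_range.mp ha)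
  have hE := choose_mul_eulerH_one_zero (m + n) (m - a)
  have hsign : (-1 : ℝ) ^ (m - a + 1) = -(-1) ^ a / (-1) ^ m := by
    rw [eq_div_iff (by simp), ← pow_add, show m - a + 1 + m = a + 1 + 2 * (m - a) by omega,
      pow_add, pow_add, pow_mul]
    norm_num
  have hb₁pow : b₁ ^ (-(a : ℤ) - 1) = b₁ ^ (m - a + 1) / b₁ ^ (m + 2) := by
    rw [← zpow_natCast, ← zpow_natCast, ← zpow_sub₀ hb₁]; push_cast [ha]; ring_nf
  simp only [bernoulliPairTerm, hsign, hb₁pow, show m + 1 - 1 - a = m - a by omega,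
    show m + n + 2 - (m - a + 1) = n + a + 1 by omega]
  push_cast at hE
  calc _ = (-1 : ℝ) ^ a * b₂ ^ a * (b₁ ^ (m - a + 1) / b₁ ^ (m + 2)) * bernoulliH 1 (n + a + 1) 0 *
        (((m + n + 1).choose (m - a) : ℝ) * eulerH 1 (m - a) 0) := by ring
    _ = _ := by
      rw [hE]
      field_simp
      ring

theorem stmt_17 (b₁ b₂ : ℝ) (hb₁ : b₁ ≠ 0) (hb₂ : b₂ ≠ 0) (m n : ℕ) :
    (∑ a ∈ Finset.range (n + 1), (-1 : ℝ) ^ a * (Nat.choose (m + n + 1) (n - a) : ℝ) *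
        b₁ ^ a * b₂ ^ (-(a : ℤ) - 1) * bernoulliH 1 (n - a) 0 * eulerH 1 (m + a + 1) 0)
      - (∑ a ∈ Finset.range (m + 1), (-1 : ℝ) ^ a * (Nat.choose (m + n + 1) (m - a) : ℝ) *
        b₂ ^ a * b₁ ^ (-(a : ℤ) - 1) * eulerH 1 (m - a) 0 * bernoulliH 1 (n + a + 1) 0)
    = ((-1 : ℝ) ^ m / (b₁ ^ (m + 2) * b₂ ^ (n + 1))) * (2 / (m + n + 2 : ℝ)) *
        ∑ a ∈ Finset.Icc 1 (m + n + 2), (-1 : ℝ) ^ a * (Nat.choose (m + n + 2) a : ℝ) *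
          b₁ ^ a * b₂ ^ (m + n + 2 - a) * (1 - 2 ^ a) *
          bernoulliH 1 (m + n + 2 - a) 0 * bernoulliH 1 a 0 := by
  have hsplit := sum_Icc_one_add (bernoulliPairTerm b₁ b₂ (m + n + 2)) (m + 1) (n + 1)
  rw [show m + 1 + (n + 1) = m + n + 2 by ring] at hsplit
  change _ = _ * ∑ a ∈ Icc 1 (m + n + 2), bernoulliPairTerm b₁ b₂ (m + n + 2) a
  rw [sum_bernoulliH_mul_eulerH hb₁ hb₂, sum_eulerH_mul_bernoulliH hb₁ hb₂, hsplit,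
    sub_neg_eq_add, ← mul_add, add_comm (∑ a ∈ range (n + 1), _)]
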